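/- Let a, b > 0, U(z) = tanh((b/a)z), and let H, γ, α ∈ ℝ. Set W¹(z) = −a²·H·U'(z) and W²(z) = [H²·(a²·z/2 + α) + a·H·γ·z]·U'(z). Then W² satisfies the second-order inner equation a²·(W²)''(z) − b²·ψ''(U(z))·W²(z) = −(a²·H + 2a·γ)·(W¹)'(z) for all z ∈ ℝ, where ψ''(u) = 6u²−2. -/

import Mathlib

lemma hasDerivAt_tanh' (x : ℝ) :
    HasDerivAt Real.tanh (1 - Real.tanh x ^ 2) x := by
  have h : (fun y : ℝ => Real.sinh y / Real.cosh y) = Real.tanh := by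
    funext y; rw [Real.tanh_eq_sinh_div_cosh]
  have hc : Real.cosh x ≠ 0 := (Real.cosh_pos x).ne'
  have := (Real.hasDerivAt_sinh x).div (Real.hasDerivAt_cosh x) hc
  rw [show (Real.sinh / Real.cosh) = Real.tanh from h] at this
  refine this.congr_deriv ?_
  rw [Real.tanh_eq_sinh_div_cosh]
  have h2 : Real.cosh x ^ 2 - Real.sinh x ^ 2 = 1 := Real.cosh_sq_sub_sinh_sq x
  field_simp

/-- For `a, b > 0`, `U(z) = tanh((b/a)z)`, and reals `H, γ, α`, the functions
`W¹(z) = −a²H U'(z)` and `W²(z) = [H²(a²z/2 + α) + aHγz] U'(z)` satisfy the second-order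
inner equation `a² (W²)'' − b² ψ''(U) W² = −(a²H + 2aγ)(W¹)'` with `ψ''(u) = 6u²−2`. -/
theorem stmt_7 (a b H γ α : ℝ) (ha : 0 < a) (hb : 0 < b)
    (U W1 W2 : ℝ → ℝ)
    (hU : U = fun z => Real.tanh ((b / a) * z))
    (hW1 : W1 = fun z => -(a ^ 2) * H * deriv U z)
    (hW2 : W2 = fun z => (H ^ 2 * (a ^ 2 * z / 2 + α) + a * H * γ * z) * deriv U z) :
    ∀ z : ℝ, a ^ 2 * deriv (deriv W2) z - b ^ 2 * (6 * (U z) ^ 2 - 2) * W2 z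
      = -(a ^ 2 * H + 2 * a * γ) * deriv W1 z := by
  set c : ℝ := b / a with hc
  set t : ℝ → ℝ := fun z => Real.tanh (c * z) with htdef
  have ht : ∀ z : ℝ, HasDerivAt t (c * (1 - t z ^ 2)) z := by
    intro z
    have h1 : HasDerivAt (fun z : ℝ => c * z) c z := by
      simpa using (hasDerivAt_id z).const_mul c
    have h2 := (hasDerivAt_tanh' (c * z)).comp z h1
    have h3 : HasDerivAt (fun z => Real.tanh (c * z)) ((1 - Real.tanh (c * z) ^ 2) * c) z := h2
    simpa [htdef] using h3.congr_deriv (by ring)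
  have hUt : U = t := hU
  have hderivU : deriv U = fun z => c * (1 - t z ^ 2) := by
    funext z; rw [hUt]; exact (ht z).deriv
  -- Closed form for W2
  set P : ℝ → ℝ := fun z => H ^ 2 * (a ^ 2 * z / 2 + α) + a * H * γ * z with hP
  set P' : ℝ := H ^ 2 * a ^ 2 / 2 + a * H * γ with hP'
  have hPd : ∀ z : ℝ, HasDerivAt P P' z := by
    intro z
    have h1 : HasDerivAt (fun z : ℝ => H ^ 2 * (a ^ 2 * z / 2 + α)) (H ^ 2 * (a ^ 2 / 2)) z := by
      have h0 : HasDerivAt (fun z : ℝ => a ^ 2 * z) (a ^ 2) z := by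
        simpa using (hasDerivAt_id' z).const_mul (a ^ 2)
      exact ((((h0.div_const 2).add_const α).const_mul (H ^ 2))).congr_deriv (by ring)
    have h2 : HasDerivAt (fun z : ℝ => a * H * γ * z) (a * H * γ) z := by
      simpa using (hasDerivAt_id' z).const_mul (a * H * γ)
    exact (h1.add h2).congr_deriv (by rw [hP']; ring)
  have hW2' : W2 = fun z => P z * (c * (1 - t z ^ 2)) := by
    rw [hW2, hderivU]
  -- first derivative of W2
  set D1 : ℝ → ℝ := fun z =>
    P' * (c * (1 - t z ^ 2)) + P z * (c * (-(2 * t z * (c * (1 - t z ^ 2))))) with hD1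
  have hs : ∀ z : ℝ, HasDerivAt (fun z => c * (1 - t z ^ 2))
      (c * (-(2 * t z * (c * (1 - t z ^ 2))))) z := by
    intro z
    have h1 : HasDerivAt (fun z => t z ^ 2) (2 * t z * (c * (1 - t z ^ 2))) z := by
      have h1' : HasDerivAt (fun z => t z * t z) (2 * t z * (c * (1 - t z ^ 2))) z :=
        ((ht z).mul (ht z)).congr_deriv (by ring)
      simpa [pow_two] using h1'
    have := ((h1.const_sub 1)).const_mul c
    simpa using this.congr_deriv (by ring)
  have hW2d : ∀ z : ℝ, HasDerivAt W2 (D1 z) z := by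
    intro z
    rw [hW2']
    exact (hPd z).mul (hs z)
  have hderivW2 : deriv W2 = D1 := funext fun z => (hW2d z).deriv
  -- second derivative
  have hD1d : ∀ z : ℝ, HasDerivAt D1
      (P' * (c * (-(2 * t z * (c * (1 - t z ^ 2)))))
        + (P' * (c * (-(2 * t z * (c * (1 - t z ^ 2)))))
          + P z * (c * (-(2 * ((c * (1 - t z ^ 2)) * (c * (1 - t z ^ 2))
            + t z * (c * (-(2 * t z * (c * (1 - t z ^ 2))))))))))) z := by
    intro z
    have h1 : HasDerivAt (fun z => P' * (c * (1 - t z ^ 2)))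
        (P' * (c * (-(2 * t z * (c * (1 - t z ^ 2)))))) z := (hs z).const_mul P'
    have hinner : HasDerivAt (fun z => t z * (c * (1 - t z ^ 2)))
        ((c * (1 - t z ^ 2)) * (c * (1 - t z ^ 2))
          + t z * (c * (-(2 * t z * (c * (1 - t z ^ 2)))))) z := (ht z).mul (hs z)
    have h2 : HasDerivAt (fun z => c * (-(2 * t z * (c * (1 - t z ^ 2)))))
        (c * (-(2 * ((c * (1 - t z ^ 2)) * (c * (1 - t z ^ 2))
          + t z * (c * (-(2 * t z * (c * (1 - t z ^ 2))))))))) z := by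
      have := ((hinner.const_mul 2).neg).const_mul c
      simpa [mul_assoc] using this
    exact h1.add ((hPd z).mul h2)
  intro z
  have hdd : deriv (deriv W2) z
      = P' * (c * (-(2 * t z * (c * (1 - t z ^ 2)))))
        + (P' * (c * (-(2 * t z * (c * (1 - t z ^ 2)))))
          + P z * (c * (-(2 * ((c * (1 - t z ^ 2)) * (c * (1 - t z ^ 2))
            + t z * (c * (-(2 * t z * (c * (1 - t z ^ 2))))))))))  := by
    rw [hderivW2]; exact (hD1d z).deriv
  -- derivative of W1
  have hW1' : W1 = fun z => -(a ^ 2) * H * (c * (1 - t z ^ 2)) := by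
    rw [hW1, hderivU]
  have hW1d : HasDerivAt W1
      (-(a ^ 2) * H * (c * (-(2 * t z * (c * (1 - t z ^ 2)))))) z := by
    rw [hW1']
    exact (hs z).const_mul _
  rw [hdd, hW1d.deriv, hW2', hUt]
  have hca : c * a = b := by rw [hc]; exact div_mul_cancel₀ b ha.ne'
  have hb2 : b ^ 2 = c ^ 2 * a ^ 2 := by rw [← hca]; ring
  rw [hb2, hP, hP']
  ring
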